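/- For Bernoulli parameters x, y in (0,1) with x > y, the KL divergence D(x||y) = x·ln(x/y) + (1−x)·ln((1−x)/(1−y)) satisfies D(x||y) ≥ (x−y)²/(2x). -/

import Mathlib

/-- Bernoulli KL divergence. -/
noncomputable def bernoulliKL (x y : ℝ) : ℝ :=
  x * Real.log (x / y) + (1 - x) * Real.log ((1 - x) / (1 - y))

theorem bernoulliKL_lower_bound_left (x y : ℝ) (hy : 0 < y) (hyx : y < x) (hx : x < 1) :
    (x - y) ^ 2 / (2 * x) ≤ bernoulliKL x y := by
  have hx0 : 0 < x := hy.trans hyx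
  set F : ℝ → ℝ := fun t => x * Real.log x - x * Real.log t
      + (1 - x) * Real.log (1 - x) - (1 - x) * Real.log (1 - t) - (x - t) ^ 2 / (2 * x) with hF
  have hd : ∀ t : ℝ, 0 < t → t < 1 →
      HasDerivAt F (-(x * t⁻¹) - (1 - x) * ((1 - t)⁻¹ * (-1))
        - 2 * (x - t) ^ 1 * (0 - 1) / (2 * x)) t := by
    intro t ht0 ht1
    have h1 : HasDerivAt (fun t : ℝ => x * Real.log t) (x * t⁻¹) t :=
      (Real.hasDerivAt_log ht0.ne').const_mul x
    have h2 : HasDerivAt (fun t : ℝ => 1 - t) (0 - 1) t :=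
      (hasDerivAt_const t (1:ℝ)).sub (hasDerivAt_id t)
    have h3 : HasDerivAt (fun t : ℝ => Real.log (1 - t)) ((1 - t)⁻¹ * (-1)) t := by
      have := (Real.hasDerivAt_log (by linarith : (1:ℝ) - t ≠ 0)).comp t h2
      simpa [Function.comp_def] using this
    have h4 : HasDerivAt (fun t : ℝ => (1 - x) * Real.log (1 - t))
        ((1 - x) * ((1 - t)⁻¹ * (-1))) t := h3.const_mul (1 - x)
    have h5 : HasDerivAt (fun t : ℝ => (x - t) ^ 2) (2 * (x - t) ^ 1 * (0 - 1)) t := by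
      have := ((hasDerivAt_const t x).sub (hasDerivAt_id t)).pow 2
      simpa [Pi.sub_def, Pi.pow_def] using this
    have h6 : HasDerivAt (fun t : ℝ => (x - t) ^ 2 / (2 * x))
        (2 * (x - t) ^ 1 * (0 - 1) / (2 * x)) t := h5.div_const (2 * x)
    have := ((((hasDerivAt_const t (x * Real.log x)).sub h1).add
        (hasDerivAt_const t ((1 - x) * Real.log (1 - x)))).sub h4).sub h6
    simpa [hF, Pi.sub_def, Pi.add_def] using this.congr_deriv (by ring)
  have key : AntitoneOn F (Set.Icc y x) := by
    apply antitoneOn_of_deriv_nonpos (convex_Icc y x)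
    · intro t ht
      have ht0 : 0 < t := lt_of_lt_of_le hy ht.1
      have ht1 : t < 1 := lt_of_le_of_lt ht.2 hx
      exact (hd t ht0 ht1).continuousAt.continuousWithinAt
    · intro t ht
      rw [interior_Icc] at ht
      exact (hd t (hy.trans ht.1) (ht.2.trans hx)).differentiableAt.differentiableWithinAt
    · intro t ht
      rw [interior_Icc] at ht
      have ht0 : 0 < t := hy.trans ht.1
      have ht1 : t < 1 := ht.2.trans hx
      rw [(hd t ht0 ht1).deriv]
      have h1t : 0 < 1 - t := by linarith
      have heq : -(x * t⁻¹) - (1 - x) * ((1 - t)⁻¹ * (-1)) - 2 * (x - t) ^ 1 * (0 - 1) / (2 * x)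
          = ((x - t) * (t * (1 - t) - x)) / (x * t * (1 - t)) := by
        field_simp
        ring
      rw [heq]
      apply div_nonpos_of_nonpos_of_nonneg
      · have hnum : t * (1 - t) - x < 0 := by nlinarith [sq_nonneg t, ht.2]
        exact mul_nonpos_of_nonneg_of_nonpos (by linarith [ht.2]) hnum.le
      · positivity
  have hFx : F x = 0 := by simp [hF]
  have hFy : 0 ≤ F y := by
    have := key (Set.left_mem_Icc.mpr hyx.le) (Set.right_mem_Icc.mpr hyx.le) hyx.le
    rw [hFx] at this; exact this
  have hlog1 : Real.log (x / y) = Real.log x - Real.log y := Real.log_div hx0.ne' hy.ne'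
  have hlog2 : Real.log ((1 - x) / (1 - y)) = Real.log (1 - x) - Real.log (1 - y) :=
    Real.log_div (by linarith) (by linarith)
  have : F y = bernoulliKL x y - (x - y) ^ 2 / (2 * x) := by
    simp only [hF, bernoulliKL, hlog1, hlog2]; ring
  linarith [hFy, this ▸ hFy]
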